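/- Let P be an orthogonal projection and X Hermitian with X = XP + PX. Then for every integer k ≥ 0, P X^{2k} = X^{2k} P and P X^{2k+1} P = 0; moreover P|X| = |X|P = |XP|. -/

import Mathlib

open Matrix
open scoped ComplexOrder

noncomputable section

namespace Matrix.PosSemidef
variable {n : Type*} [Fintype n] [DecidableEq n] {𝕜 : Type*} [RCLike 𝕜] {A : Matrix n n 𝕜}
noncomputable def sqrt (hA : A.PosSemidef) : Matrix n n 𝕜 :=
  hA.1.eigenvectorUnitary.1 * diagonal ((↑) ∘ Real.sqrt ∘ hA.1.eigenvalues) *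
  (star hA.1.eigenvectorUnitary : Matrix n n 𝕜)
lemma posSemidef_sqrt (hA : A.PosSemidef) : PosSemidef hA.sqrt := by
  unfold sqrt
  have hd : (diagonal ((↑) ∘ Real.sqrt ∘ hA.1.eigenvalues : n → 𝕜)).PosSemidef := by
    refine PosSemidef.diagonal ?_
    intro i
    simp [Real.sqrt_nonneg]
  simpa [Matrix.star_eq_conjTranspose] using hd.mul_mul_conjTranspose_same (hA.1.eigenvectorUnitary.1)
end Matrix.PosSemidef

/-- n×n complex matrices -/
abbrev Mat (n : ℕ) := Matrix (Fin n) (Fin n) ℂ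

/-- modulus |A| = sqrt (Aᴴ A) -/
noncomputable def matAbs {n : ℕ} (A : Mat n) : Mat n :=
  (Matrix.posSemidef_conjTranspose_mul_self A).sqrt

/-- spectral (operator) norm -/
noncomputable def specNorm {n : ℕ} (A : Mat n) : ℝ :=
  ‖Matrix.toEuclideanCLM (𝕜 := ℂ) (n := Fin n) A‖

/-- Löwner order: `A ≤ B` iff `B - A` is positive semidefinite -/
def loewnerLE {n : ℕ} (A B : Mat n) : Prop := (B - A).PosSemidef

/-- singular values of `A`, arranged in non-increasing order -/
noncomputable def sval {n : ℕ} (A : Mat n) : Fin n → ℝ :=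
  fun i =>
    let e := ((Matrix.posSemidef_conjTranspose_mul_self A).posSemidef_sqrt).1.eigenvalues
    (e ∘ Tuple.sort e) i.rev

/-- singular values indexed by naturals (0 beyond the size) -/
noncomputable def svalNat {n : ℕ} (A : Mat n) (k : ℕ) : ℝ :=
  if h : k < n then sval A ⟨k, h⟩ else 0

/-- eigenvalues of a Hermitian matrix, arranged in non-increasing order -/
noncomputable def eigsDesc {n : ℕ} {A : Mat n} (hA : A.IsHermitian) : Fin n → ℝ :=
  fun i => (hA.eigenvalues ∘ Tuple.sort hA.eigenvalues) i.rev

/-! Codiagonality gives `P X P = 0` and `P X = X - X P`, hence `P` commutes with `X ^ 2`, with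
all even powers of `X`, and with `|X| = √(X ^ 2)`, a continuous function of `X ^ 2`. Then
`|X| P = P |X| P` is positive semidefinite with square `X ^ 2 P = (X P)ᴴ (X P)`, so it is `|X P|`
by uniqueness of positive square roots. -/

section Codiagonal

variable {R : Type*} [Ring R] {P X : R}

theorem mul_mul_self_eq_zero_of_codiagonal (hP : IsIdempotentElem P)
    (hX : X = X * P + P * X) : P * X * P = 0 := by
  have h : P * X = P * X * P + P * X := by
    conv_lhs => rw [hX]
    rw [mul_add, ← mul_assoc, ← mul_assoc, hP.eq]
  simpa using h.symm

theorem commute_mul_self_of_codiagonal (hX : X = X * P + P * X) : Commute P (X * X) := by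
  have hPX : P * X = X - X * P := eq_sub_of_add_eq' hX.symm
  calc P * (X * X) = (X - X * P) * X := by rw [← mul_assoc, hPX]
    _ = X * X - X * (X - X * P) := by rw [sub_mul, mul_assoc X P X, hPX]
    _ = X * X * P := by noncomm_ring

theorem commute_pow_even_of_codiagonal (hX : X = X * P + P * X) (k : ℕ) :
    Commute P (X ^ (2 * k)) := by
  rw [pow_mul, sq]
  exact (commute_mul_self_of_codiagonal hX).pow_right k

theorem mul_pow_odd_mul_eq_zero_of_codiagonal (hP : IsIdempotentElem P)
    (hX : X = X * P + P * X) (k : ℕ) : P * X ^ (2 * k + 1) * P = 0 := by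
  rw [pow_succ, ← mul_assoc, (commute_pow_even_of_codiagonal hX k).eq, mul_assoc,
    mul_assoc, ← mul_assoc P, mul_mul_self_eq_zero_of_codiagonal hP hX, mul_zero]

end Codiagonal

namespace Matrix.PosSemidef

open scoped MatrixOrder

variable {ι 𝕜 : Type*} [Fintype ι] [DecidableEq ι] [RCLike 𝕜] {A : Matrix ι ι 𝕜}

theorem sqrt_eq_cfcSqrt (hA : A.PosSemidef) : hA.sqrt = CFC.sqrt A := by
  rw [CFC.sqrt_eq_cfc, cfc_nnreal_eq_real _ A, hA.1.cfc_eq]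
  simp only [sqrt, IsHermitian.cfc, Unitary.conjStarAlgAut_apply]
  congr 3
  funext i
  simp [Real.coe_toNNReal', max_eq_left (hA.eigenvalues_nonneg i)]

theorem sqrt_mul_self (hA : A.PosSemidef) : hA.sqrt * hA.sqrt = A := by
  rw [sqrt_eq_cfcSqrt]
  exact CFC.sqrt_mul_sqrt_self A hA.nonneg

theorem eq_sqrt_of_mul_self_eq {B : Matrix ι ι 𝕜} (hA : A.PosSemidef) (hB : B.PosSemidef)
    (h : B * B = A) : B = hA.sqrt := by
  rw [sqrt_eq_cfcSqrt]
  exact (CFC.sqrt_unique h hB.nonneg).symm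

theorem commute_sqrt {B : Matrix ι ι 𝕜} (hA : A.PosSemidef) (h : Commute B A) :
    Commute B hA.sqrt := by
  rw [sqrt_eq_cfcSqrt, CFC.sqrt_eq_cfc]
  exact (h.symm.cfc_nnreal _).symm

end Matrix.PosSemidef

section MatAbs

variable {n : ℕ}

theorem posSemidef_matAbs (A : Mat n) : (matAbs A).PosSemidef :=
  (posSemidef_conjTranspose_mul_self A).posSemidef_sqrt

theorem matAbs_mul_self (A : Mat n) : matAbs A * matAbs A = Aᴴ * A :=
  (posSemidef_conjTranspose_mul_self A).sqrt_mul_self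

theorem eq_matAbs_of_mul_self_eq {A B : Mat n} (hB : B.PosSemidef) (h : B * B = Aᴴ * A) :
    B = matAbs A :=
  (posSemidef_conjTranspose_mul_self A).eq_sqrt_of_mul_self_eq hB h

theorem commute_matAbs {A B : Mat n} (h : Commute B (Aᴴ * A)) : Commute B (matAbs A) :=
  (posSemidef_conjTranspose_mul_self A).commute_sqrt h

theorem matAbs_mul_of_commute {A P : Mat n} (hP : P.IsHermitian) (hP2 : IsIdempotentElem P)
    (h : Commute P (Aᴴ * A)) : matAbs (A * P) = matAbs A * P := by
  have hS : Commute P (matAbs A) := commute_matAbs h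
  symm
  apply eq_matAbs_of_mul_self_eq
  · have hSP : matAbs A * P = Pᴴ * matAbs A * P := by
      rw [hP.eq, hS.eq, mul_assoc, hP2.eq]
    rw [hSP]
    exact (posSemidef_matAbs A).conjTranspose_mul_mul_same P
  · calc matAbs A * P * (matAbs A * P) = matAbs A * matAbs A * (P * P) := by
          rw [mul_assoc, ← mul_assoc P, hS.eq]; noncomm_ring
      _ = P * (Aᴴ * A) * P := by rw [matAbs_mul_self, ← mul_assoc, h.eq]
      _ = (A * P)ᴴ * (A * P) := by rw [conjTranspose_mul, hP.eq]; noncomm_ring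

end MatAbs

theorem stmt15 {n : ℕ} (P X : Mat n) (hP : P.IsHermitian) (hP2 : P * P = P)
    (hX : X.IsHermitian) (hcod : X = X * P + P * X) :
    (∀ k : ℕ, P * X ^ (2 * k) = X ^ (2 * k) * P ∧ P * X ^ (2 * k + 1) * P = 0) ∧
    P * matAbs X = matAbs X * P ∧ matAbs X * P = matAbs (X * P) := by
  have hPidem : IsIdempotentElem P := hP2
  have hPX2 : Commute P (Xᴴ * X) := by
    rw [hX.eq]
    exact commute_mul_self_of_codiagonal hcod
  refine ⟨fun k => ⟨(commute_pow_even_of_codiagonal hcod k).eq,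
    mul_pow_odd_mul_eq_zero_of_codiagonal hPidem hcod k⟩, (commute_matAbs hPX2).eq, ?_⟩
  exact (matAbs_mul_of_commute hP hPidem hPX2).symm
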